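/- Fix a positive integer $p$ and for each $n$ let $A_{p,s}$ (for $0 \le s \le p-1$) be the set of $p$-tuples $(i_1,\ldots,i_p) \in \{0,\ldots,n-1\}^p$ with $i_1+\cdots+i_p = sn$. Then $\lim_{n\to\infty} \frac{|A_{p,s}|}{n^{p-1}} = \frac{1}{(p-1)!}\sum_{k=0}^{s}(-1)^k\binom{p}{k}(s-k)^{p-1} = f_p(s)$, where $f_p$ is the Irwin–Hall density of the sum of $p$ i.i.d. uniform $[0,1]$ random variables. -/

import Mathlib

/-!
Call a coordinate of a tuple with sum `sn` *large* if it is at least `n`. By inclusion–exclusion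
over the set `T` of coordinates required to be large, the tuples with all coordinates `< n` number
`∑_{j ≤ s} (-1)^j C(p, j) M((s - j) n)`, where `M(r)` counts the tuples in `ℕ^p` with sum `r`:
subtracting `n` from the coordinates in `T` leaves an arbitrary tuple with sum `(s - |T|) n`.
Since `M(r) = C(r + p - 1, p - 1)`, the term `M((s - j) n) / n^(p-1)` tends to
`(s - j)^(p-1) / (p-1)!`.
-/

open Finset Filter Topology

theorem Finset.card_filter_forall_not_eq_sum_powerset {α ι : Type*} (U : Finset α) (s : Finset ι)
    (P : ι → α → Prop) [∀ i, DecidablePred (P i)] :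
    (#{x ∈ U | ∀ i ∈ s, ¬ P i x} : ℤ) =
      ∑ t ∈ s.powerset, (-1 : ℤ) ^ #t * #{x ∈ U | ∀ i ∈ t, P i x} := by
  classical
  have card_univ_filter (Q : α → Prop) [DecidablePred Q] :
      #({x : U | Q x} : Finset U) = #{x ∈ U | Q x} := by
    rw [univ_eq_attach, filter_attach, card_map, card_attach]
  have h := inclusion_exclusion_card_inf_compl s fun i ↦ ({x : U | P i x} : Finset U)
  convert h using 3 with t
  · rw [← card_univ_filter]
    congr 1
    ext
    simp [mem_inf]
  · rw [← card_univ_filter]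
    congr 2
    ext
    simp [mem_inf]

theorem Finset.Nat.card_antidiagonalTuple (k m : ℕ) :
    #(Nat.antidiagonalTuple k m) = k.multichoose m := by
  have h := card_finsuppAntidiag_nat_eq_multichoose (s := (univ : Finset (Fin k))) m
  rw [card_univ, Fintype.card_fin] at h
  rw [← h]
  refine card_equiv Finsupp.equivFunOnFinite.symm fun x ↦ ?_
  simp [Nat.mem_antidiagonalTuple]

theorem Finset.Nat.card_filter_forall_le_antidiagonalTuple {k m : ℕ} (c : Fin k → ℕ) :
    #{x ∈ Nat.antidiagonalTuple k m | ∀ i, c i ≤ x i} =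
      if ∑ i, c i ≤ m then #(Nat.antidiagonalTuple k (m - ∑ i, c i)) else 0 := by
  split_ifs with hc
  · symm
    refine card_nbij' (· + c) (· - c) (fun y hy ↦ ?_) (fun x hx ↦ ?_)
      (fun y _ ↦ add_tsub_cancel_right y c) (fun x hx ↦ tsub_add_cancel_of_le (mem_filter.1 hx).2)
    · simp only [coe_filter, Set.mem_ofPred_eq, Nat.mem_antidiagonalTuple, mem_coe] at hy ⊢
      simp only [Pi.add_apply, sum_add_distrib, hy, le_add_iff_nonneg_left, zero_le,
        implies_true, and_true]
      omega
    · simp only [coe_filter, Set.mem_ofPred_eq, Nat.mem_antidiagonalTuple, mem_coe] at hx ⊢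
      simp only [Pi.sub_apply]
      rw [sum_tsub_distrib _ fun i _ ↦ hx.2 i, hx.1]
  · rw [card_eq_zero, filter_eq_empty_iff]
    intro x hx hcx
    rw [Nat.mem_antidiagonalTuple] at hx
    exact hc (hx ▸ sum_le_sum fun i _ ↦ hcx i)

theorem card_fin_tuples_sum_eq (p n m : ℕ) :
    (#{t : Fin p → Fin n | ∑ i, (t i : ℕ) = m} : ℤ) =
      ∑ j ∈ range (p + 1),
        (-1 : ℤ) ^ j * p.choose j * if j * n ≤ m then p.multichoose (m - j * n) else 0 := by
  have bounded : #{t : Fin p → Fin n | ∑ i, (t i : ℕ) = m} =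
      #{x ∈ Nat.antidiagonalTuple p m | ∀ i, x i < n} := by
    refine card_bij (fun t _ i ↦ (t i : ℕ)) (fun t ht ↦ ?_) (fun t₁ _ t₂ _ h ↦ ?_) (fun x hx ↦ ?_)
    · rw [mem_filter] at ht ⊢
      exact ⟨Nat.mem_antidiagonalTuple.2 ht.2, fun i ↦ (t i).isLt⟩
    · exact funext fun i ↦ Fin.ext (congrFun h i)
    · rw [mem_filter, Nat.mem_antidiagonalTuple] at hx
      exact ⟨fun i ↦ ⟨x i, hx.2 i⟩, by simpa using hx.1, rfl⟩
  have large (t : Finset (Fin p)) : #{x ∈ Nat.antidiagonalTuple p m | ∀ i ∈ t, n ≤ x i} =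
      if #t * n ≤ m then p.multichoose (m - #t * n) else 0 := by
    have hsum : ∑ i, (if i ∈ t then n else 0) = #t * n := by
      rw [sum_ite_mem, univ_inter, sum_const, smul_eq_mul]
    rw [← hsum, ← Nat.card_antidiagonalTuple, ← Nat.card_filter_forall_le_antidiagonalTuple]
    refine congrArg card (filter_congr fun x _ ↦ forall_congr' fun i ↦ ?_)
    split_ifs <;> simp [*]
  -- `convert` reconciles the `Decidable` instances of `∀ i ∈ univ, _` chosen on the two sides.
  have inclusion_exclusion : (#{x ∈ Nat.antidiagonalTuple p m | ∀ i, x i < n} : ℤ) =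
      ∑ t ∈ univ.powerset, (-1 : ℤ) ^ #t * #{x ∈ Nat.antidiagonalTuple p m | ∀ i ∈ t, n ≤ x i} := by
    convert card_filter_forall_not_eq_sum_powerset _ univ fun i (x : Fin p → ℕ) ↦ n ≤ x i using 6
    simp
  rw [bounded, inclusion_exclusion]
  simp_rw [large]
  rw [sum_powerset_apply_card
    (f := fun j ↦ (-1 : ℤ) ^ j * ((if j * n ≤ m then p.multichoose (m - j * n) else 0 : ℕ) : ℤ)),
    card_univ, Fintype.card_fin]
  refine sum_congr rfl fun j _ ↦ ?_
  push_cast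
  ring

theorem card_fin_tuples_sum_eq_mul {p n s : ℕ} (hn : 0 < n) (hs : s ≤ p) :
    (#{t : Fin p → Fin n | ∑ i, (t i : ℕ) = s * n} : ℤ) =
      ∑ j ∈ range (s + 1), (-1 : ℤ) ^ j * p.choose j * p.multichoose ((s - j) * n) := by
  have vanish : ∀ j ∈ range (p + 1), j ∉ range (s + 1) → (-1 : ℤ) ^ j * p.choose j *
      (if j * n ≤ s * n then p.multichoose (s * n - j * n) else 0) = 0 := by
    intro j _ hj
    rw [mem_range, not_lt] at hj
    rw [if_neg (not_le.2 (Nat.mul_lt_mul_of_pos_right hj hn)), Nat.cast_zero, mul_zero]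
  rw [card_fin_tuples_sum_eq, ← sum_subset (range_subset_range.2 (by omega)) vanish]
  refine sum_congr rfl fun j hj ↦ ?_
  rw [if_pos (Nat.mul_le_mul_right n (Nat.lt_succ_iff.1 (mem_range.1 hj))), ← Nat.sub_mul]

theorem tendsto_multichoose_mul_div_pow (a q : ℕ) :
    Tendsto (fun n : ℕ ↦ ((q + 1).multichoose (a * n) : ℝ) / n ^ q) atTop
      (𝓝 ((a : ℝ) ^ q / q.factorial)) := by
  have factor (n : ℕ) (hn : n ≠ 0) : ((q + 1).multichoose (a * n) : ℝ) / n ^ q =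
      (∏ i ∈ range q, ((a : ℝ) + (i + 1 : ℝ) / n)) / q.factorial := by
    have h : q.factorial * (q + 1).multichoose (a * n) = ∏ i ∈ range q, (a * n + 1 + i) := by
      rw [Nat.multichoose_eq, show q + 1 + a * n - 1 = a * n + q by omega, Nat.choose_symm_add,
        ← Nat.ascFactorial_eq_factorial_mul_choose, Nat.ascFactorial_eq_prod_range]
    have hq : (q.factorial : ℝ) ≠ 0 := by positivity
    rw [eq_div_iff hq, div_mul_eq_mul_div, div_eq_iff (by positivity), mul_comm, ← Nat.cast_mul, h,
      show (n : ℝ) ^ q = ∏ _i ∈ range q, (n : ℝ) by simp, ← prod_mul_distrib]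
    push_cast
    refine prod_congr rfl fun i _ ↦ ?_
    field_simp
    ring
  have hprod : Tendsto (fun n : ℕ ↦ ∏ i ∈ range q, ((a : ℝ) + (i + 1 : ℝ) / n)) atTop
      (𝓝 ((a : ℝ) ^ q)) := by
    simpa using tendsto_finsetProd (range q) fun i _ ↦
      (tendsto_const_nhds (x := (a : ℝ))).add (tendsto_const_div_atTop_nhds_zero_nat ((i : ℝ) + 1))
  refine (hprod.div_const _).congr' ?_
  filter_upwards [eventually_ne_atTop 0] with n hn
  exact (factor n hn).symm

/-- The normalized count of `p`-tuples in `{0,…,n-1}` summing to `s*n` converges to the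
Irwin–Hall density at `s`. -/
theorem stmt_11 (p s : ℕ) (hp : 0 < p) (hs : s ≤ p - 1) :
    Filter.Tendsto (fun n : ℕ =>
        ((Finset.univ.filter
            (fun t : Fin p → Fin n => ∑ k, (t k : ℕ) = s * n)).card : ℝ) / n ^ (p - 1))
      Filter.atTop
      (nhds ((1 / (p - 1).factorial) *
        ∑ k ∈ Finset.range (s + 1),
          (-1 : ℝ) ^ k * (p.choose k) * ((s : ℝ) - k) ^ (p - 1))) := by
  obtain ⟨q, rfl⟩ : ∃ q, p = q + 1 := ⟨p - 1, by omega⟩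
  rw [Nat.add_sub_cancel] at hs ⊢
  have count : ∀ᶠ n : ℕ in atTop,
      ∑ j ∈ range (s + 1), (-1 : ℝ) ^ j * (q + 1).choose j *
          (((q + 1).multichoose ((s - j) * n) : ℝ) / n ^ q) =
        (#{t : Fin (q + 1) → Fin n | ∑ k, (t k : ℕ) = s * n} : ℝ) / n ^ q := by
    filter_upwards [eventually_gt_atTop 0] with n hn
    have h := congrArg (Int.cast : ℤ → ℝ)
      (card_fin_tuples_sum_eq_mul (p := q + 1) (s := s) hn (by omega))
    push_cast at h
    simp only [h, sum_div, mul_div_assoc]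
  refine Tendsto.congr' count ?_
  rw [mul_sum]
  refine tendsto_finsetSum _ fun j hj ↦ ?_
  convert (tendsto_multichoose_mul_div_pow (s - j) q).const_mul ((-1 : ℝ) ^ j * (q + 1).choose j)
    using 2
  rw [Nat.cast_sub (Nat.lt_succ_iff.1 (mem_range.1 hj))]
  ring
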